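/- arXiv:2001.01973 — 5 statements merged into one kernel-verified Lean document; each statement's English description precedes it below -/
import Mathlib

section
/- Let P = {x_1, ..., x_N} ⊆ [0,1) be a finite point set in dimension 1. Define the local discrepancy Δ_P(A) = #{j : x_j ∈ A}/N - measure(A) for A ⊆ [0,1). Then ∫_0^1 ∫_0^1 Δ_{P+δ}([0,y))² dy dδ = ∫_0^1 ∫_0^1 Δ_P(I(t,z))² dz dt, where P + δ denotes the point set {{x_1+δ}, ..., {x_N+δ}} with fractional parts taken componentwise. That is, the periodic L₂-discrepancy equals the root-mean-square shifted L₂-discrepancy. -/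
open MeasureTheory
open scoped Classical

/-- The periodic interval `I(x,y) ⊆ [0,1)`: `[x,y)` if `x ≤ y`, and `[0,y) ∪ [x,1)` if `x > y`. -/
def periodicInterval (x y : ℝ) : Set ℝ :=
  if x ≤ y then Set.Ico x y else Set.Ico 0 y ∪ Set.Ico x 1

/-- Local discrepancy of the point set `x` (of `N` points) with respect to a set `A ⊆ [0,1)`. -/
noncomputable def localDisc {N : ℕ} (x : Fin N → ℝ) (A : Set ℝ) : ℝ :=
  ((Finset.univ.filter fun j => x j ∈ A).card : ℝ) / N - (volume A).toReal

/- ### Auxiliary lemmas -/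

lemma localDisc_empty {N : ℕ} (x : Fin N → ℝ) : localDisc x (∅ : Set ℝ) = 0 := by
  simp [localDisc]

lemma localDisc_full {N : ℕ} (hN : 1 ≤ N) (x : Fin N → ℝ)
    (hx : ∀ j, x j ∈ Set.Ico (0:ℝ) 1) : localDisc x (Set.Ico 0 1) = 0 := by
  have hN' : (N:ℝ) ≠ 0 := by positivity
  have hcard : ∀ (inst : DecidablePred fun j => x j ∈ Set.Ico (0:ℝ) 1),
      (@Finset.filter _ _ inst Finset.univ).card = N := by
    intro inst
    rw [Finset.filter_true_of_mem (fun j _ => hx j), Finset.card_univ, Fintype.card_fin]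
  unfold localDisc
  rw [hcard, Real.volume_Ico]
  simp [div_self hN']

lemma fract_neg_mem (δ : ℝ) (h0 : 0 < δ) (h1 : δ < 1) : Int.fract (-δ) = 1 - δ := by
  have hδ : Int.fract δ = δ := Int.fract_eq_self.mpr ⟨le_of_lt h0, h1⟩
  rw [Int.fract_neg (by rw [hδ]; exact ne_of_gt h0), hδ]

/-- The key pointwise identity: the local discrepancy of the shifted point set with
respect to `[0,y)` equals the local discrepancy of the original point set with respect
to the periodic interval `I({-δ}, {y-δ})`. -/
lemma key {N : ℕ} (x : Fin N → ℝ) (hx : ∀ j, x j ∈ Set.Ico (0:ℝ) 1)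
    (δ y : ℝ) (hδ : δ ∈ Set.Icc (0:ℝ) 1) (hy : y ∈ Set.Ico (0:ℝ) 1) :
    localDisc (fun j => Int.fract (x j + δ)) (Set.Ico 0 y)
      = localDisc x (periodicInterval (Int.fract (-δ)) (Int.fract (y - δ))) := by
  obtain ⟨hδ0, hδ1⟩ := hδ
  obtain ⟨hy0, hy1⟩ := hy
  -- we show: the membership conditions are equivalent, and the volumes agree
  suffices h : (∀ j, (Int.fract (x j + δ) ∈ Set.Ico (0:ℝ) y) =
        (x j ∈ periodicInterval (Int.fract (-δ)) (Int.fract (y - δ)))) ∧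
      (volume (periodicInterval (Int.fract (-δ)) (Int.fract (y - δ)))).toReal = y by
    obtain ⟨hiff, hvol⟩ := h
    unfold localDisc
    simp only [hiff, hvol, Real.volume_Ico, sub_zero, ENNReal.toReal_ofReal hy0]
  rcases eq_or_lt_of_le hδ0 with h0 | h0
  · -- δ = 0
    subst h0
    have ht : Int.fract (-(0:ℝ)) = 0 := by simp
    have hz : Int.fract (y - 0) = y := by
      rw [sub_zero]; exact Int.fract_eq_self.mpr ⟨hy0, hy1⟩
    have hI : periodicInterval (Int.fract (-(0:ℝ))) (Int.fract (y - 0)) = Set.Ico 0 y := by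
      rw [ht, hz, periodicInterval, if_pos hy0]
    refine ⟨fun j => ?_, ?_⟩
    · rw [hI, add_zero, Int.fract_eq_self.mpr (hx j)]
    · rw [hI, Real.volume_Ico, sub_zero, ENNReal.toReal_ofReal hy0]
  rcases eq_or_lt_of_le hδ1 with h1 | h1
  · -- δ = 1
    subst h1
    have ht : Int.fract (-(1:ℝ)) = 0 := by
      rw [show (-1 : ℝ) = 0 + -1 by ring]
      rw [show (0:ℝ) + -1 = 0 - 1 by ring, Int.fract_sub_one, Int.fract_zero]
    have hz : Int.fract (y - 1) = y := by
      rw [Int.fract_sub_one]; exact Int.fract_eq_self.mpr ⟨hy0, hy1⟩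
    have hI : periodicInterval (Int.fract (-(1:ℝ))) (Int.fract (y - 1)) = Set.Ico 0 y := by
      rw [ht, hz, periodicInterval, if_pos hy0]
    refine ⟨fun j => ?_, ?_⟩
    · rw [hI, Int.fract_add_one, Int.fract_eq_self.mpr (hx j)]
    · rw [hI, Real.volume_Ico, sub_zero, ENNReal.toReal_ofReal hy0]
  -- 0 < δ < 1
  have ht : Int.fract (-δ) = 1 - δ := fract_neg_mem δ h0 h1
  rcases le_or_gt δ y with hcase | hcase
  · -- δ ≤ y
    have hz : Int.fract (y - δ) = y - δ :=
      Int.fract_eq_self.mpr ⟨by linarith, by linarith⟩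
    have hI : periodicInterval (Int.fract (-δ)) (Int.fract (y - δ))
        = Set.Ico 0 (y - δ) ∪ Set.Ico (1 - δ) 1 := by
      rw [ht, hz, periodicInterval, if_neg (by intro h; linarith)]
    refine ⟨fun j => ?_, ?_⟩
    · rw [hI]
      obtain ⟨hxj0, hxj1⟩ := hx j
      apply propext
      rcases lt_or_ge (x j + δ) 1 with hc | hc
      · have hf : Int.fract (x j + δ) = x j + δ :=
          Int.fract_eq_self.mpr ⟨by linarith, hc⟩
        rw [hf]
        simp only [Set.mem_Ico, Set.mem_union]
        constructor
        · rintro ⟨_, h⟩; left; exact ⟨hxj0, by linarith⟩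
        · rintro (⟨_, h⟩ | ⟨h, _⟩) <;> exact ⟨by linarith, by linarith⟩
      · have hf : Int.fract (x j + δ) = x j + δ - 1 := by
          rw [show x j + δ = (x j + δ - 1) + 1 by ring, Int.fract_add_one,
            Int.fract_eq_self.mpr ⟨by linarith, by linarith⟩]
          ring
        rw [hf]
        simp only [Set.mem_Ico, Set.mem_union]
        constructor
        · rintro ⟨_, _⟩; right; exact ⟨by linarith, hxj1⟩
        · rintro (⟨_, h⟩ | ⟨h, _⟩) <;> exact ⟨by linarith, by linarith⟩
    · rw [hI]
      have hdisj : Disjoint (Set.Ico (0:ℝ) (y - δ)) (Set.Ico (1 - δ) 1) := by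
        apply Set.disjoint_left.mpr
        rintro a ⟨_, ha2⟩ ⟨hb1, _⟩
        linarith
      rw [measure_union hdisj measurableSet_Ico, Real.volume_Ico, Real.volume_Ico,
        ENNReal.toReal_add (by exact ENNReal.ofReal_ne_top) (by exact ENNReal.ofReal_ne_top),
        ENNReal.toReal_ofReal (by linarith), ENNReal.toReal_ofReal (by linarith)]
      ring
  · -- y < δ
    have hz : Int.fract (y - δ) = y - δ + 1 := by
      rw [show y - δ = (y - δ + 1) - 1 by ring, Int.fract_sub_one,
        Int.fract_eq_self.mpr ⟨by linarith, by linarith⟩]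
      ring
    have hI : periodicInterval (Int.fract (-δ)) (Int.fract (y - δ))
        = Set.Ico (1 - δ) (y - δ + 1) := by
      rw [ht, hz, periodicInterval, if_pos (by linarith)]
    refine ⟨fun j => ?_, ?_⟩
    · rw [hI]
      obtain ⟨hxj0, hxj1⟩ := hx j
      apply propext
      rcases lt_or_ge (x j + δ) 1 with hc | hc
      · have hf : Int.fract (x j + δ) = x j + δ :=
          Int.fract_eq_self.mpr ⟨by linarith, hc⟩
        rw [hf]
        simp only [Set.mem_Ico]
        constructor
        · rintro ⟨_, h⟩; exact absurd h (by linarith)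
        · rintro ⟨h, _⟩; exact absurd h (by push_neg; linarith)
      · have hf : Int.fract (x j + δ) = x j + δ - 1 := by
          rw [show x j + δ = (x j + δ - 1) + 1 by ring, Int.fract_add_one,
            Int.fract_eq_self.mpr ⟨by linarith, by linarith⟩]
          ring
        rw [hf]
        simp only [Set.mem_Ico]
        constructor
        · rintro ⟨_, h⟩; exact ⟨by linarith, by linarith⟩
        · rintro ⟨_, h⟩; exact ⟨by linarith, by linarith⟩
    · rw [hI, Real.volume_Ico, ENNReal.toReal_ofReal (by linarith)]
      ring

/-- The squared version of `key`, valid also at the endpoint `y = 1`. -/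
lemma key_sq {N : ℕ} (hN : 1 ≤ N) (x : Fin N → ℝ) (hx : ∀ j, x j ∈ Set.Ico (0:ℝ) 1)
    (δ y : ℝ) (hδ : δ ∈ Set.Icc (0:ℝ) 1) (hy : y ∈ Set.Icc (0:ℝ) 1) :
    (localDisc (fun j => Int.fract (x j + δ)) (Set.Ico 0 y))^2
      = (localDisc x (periodicInterval (Int.fract (-δ)) (Int.fract (y - δ))))^2 := by
  rcases lt_or_eq_of_le hy.2 with h1 | h1
  · rw [key x hx δ y hδ ⟨hy.1, h1⟩]
  · subst h1
    have hL : localDisc (fun j => Int.fract (x j + δ)) (Set.Ico (0:ℝ) 1) = 0 :=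
      localDisc_full hN _ (fun j => ⟨Int.fract_nonneg _, Int.fract_lt_one _⟩)
    have htz : Int.fract (-δ) = Int.fract (1 - δ) := by
      rw [show (1:ℝ) - δ = -δ + 1 by ring, Int.fract_add_one]
    have hI : periodicInterval (Int.fract (-δ)) (Int.fract (1 - δ)) = ∅ := by
      rw [← htz, periodicInterval, if_pos le_rfl, Set.Ico_self]
    rw [hL, hI, localDisc_empty]

/-- Removing the fractional parts : pointwise on `[0,1] × [0,1]`. -/
lemma fract_removal {N : ℕ} (hN : 1 ≤ N) (x : Fin N → ℝ)
    (hx : ∀ j, x j ∈ Set.Ico (0:ℝ) 1) (u z : ℝ)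
    (hu : u ∈ Set.Icc (0:ℝ) 1) (hz : z ∈ Set.Icc (0:ℝ) 1) :
    (localDisc x (periodicInterval (Int.fract u) (Int.fract z)))^2
      = (localDisc x (periodicInterval u z))^2 := by
  have hone : ∀ w : ℝ, w ∈ Set.Icc (0:ℝ) 1 →
      localDisc x (periodicInterval 1 w) = localDisc x (periodicInterval 0 w) := by
    intro w hw
    rcases lt_or_eq_of_le hw.2 with hw1 | hw1
    · have h1 : periodicInterval 1 w = Set.Ico 0 w := by
        rw [periodicInterval, if_neg (by linarith), Set.Ico_self, Set.union_empty]
      have h0 : periodicInterval 0 w = Set.Ico 0 w := by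
        rw [periodicInterval, if_pos hw.1]
      rw [h1, h0]
    · subst hw1
      have h1 : periodicInterval 1 1 = ∅ := by
        rw [periodicInterval, if_pos le_rfl, Set.Ico_self]
      have h0 : periodicInterval 0 1 = Set.Ico 0 1 := by
        rw [periodicInterval, if_pos zero_le_one]
      rw [h1, h0, localDisc_empty, localDisc_full hN x hx]
  have hzend : ∀ w : ℝ, w ∈ Set.Ico (0:ℝ) 1 →
      localDisc x (periodicInterval w 0) = localDisc x (periodicInterval w 1) := by
    intro w hw
    rcases eq_or_lt_of_le hw.1 with hw0 | hw0
    · have h1 : periodicInterval 0 0 = ∅ := by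
        rw [periodicInterval, if_pos le_rfl, Set.Ico_self]
      have h0 : periodicInterval 0 1 = Set.Ico 0 1 := by
        rw [periodicInterval, if_pos zero_le_one]
      rw [← hw0, h1, h0, localDisc_empty, localDisc_full hN x hx]
    · have h1 : periodicInterval w 0 = Set.Ico w 1 := by
        rw [periodicInterval, if_neg (by linarith), Set.Ico_self, Set.empty_union]
      have h0 : periodicInterval w 1 = Set.Ico w 1 := by
        rw [periodicInterval, if_pos hw.2.le]
      rw [h1, h0]
  rcases lt_or_eq_of_le hu.2 with hu1 | hu1
  · have hfu : Int.fract u = u := Int.fract_eq_self.mpr ⟨hu.1, hu1⟩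
    rcases lt_or_eq_of_le hz.2 with hz1 | hz1
    · rw [hfu, Int.fract_eq_self.mpr ⟨hz.1, hz1⟩]
    · subst hz1
      rw [hfu, Int.fract_one, hzend u ⟨hu.1, hu1⟩]
  · subst hu1
    rw [Int.fract_one, ← hone (Int.fract z) ⟨Int.fract_nonneg _, (Int.fract_lt_one _).le⟩]
    rcases lt_or_eq_of_le hz.2 with hz1 | hz1
    · rw [Int.fract_eq_self.mpr ⟨hz.1, hz1⟩]
    · subst hz1
      have e0 : periodicInterval 1 (Int.fract 1) = ∅ := by
        rw [Int.fract_one, periodicInterval, if_neg (by norm_num), Set.Ico_self,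
          Set.Ico_self, Set.empty_union]
      have e1 : periodicInterval 1 1 = ∅ := by
        rw [periodicInterval, if_pos le_rfl, Set.Ico_self]
      rw [e0, e1]

/-- The periodic `L₂`-discrepancy equals the root-mean-square `L₂`-discrepancy of the
shifted point sets. -/
theorem periodic_eq_rms_shifted (N : ℕ) (hN : 1 ≤ N) (x : Fin N → ℝ)
    (hx : ∀ j, x j ∈ Set.Ico (0:ℝ) 1) :
    ∫ δ in (0:ℝ)..1, ∫ y in (0:ℝ)..1,
        (localDisc (fun j => Int.fract (x j + δ)) (Set.Ico 0 y))^2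
      = ∫ t in (0:ℝ)..1, ∫ z in (0:ℝ)..1,
          (localDisc x (periodicInterval t z))^2 := by
  have huIcc : Set.uIcc (0:ℝ) 1 = Set.Icc 0 1 := Set.uIcc_of_le zero_le_one
  -- Step 1: rewrite the integrand using the key identity
  have step1 : ∫ δ in (0:ℝ)..1, ∫ y in (0:ℝ)..1,
        (localDisc (fun j => Int.fract (x j + δ)) (Set.Ico 0 y))^2
      = ∫ δ in (0:ℝ)..1, ∫ y in (0:ℝ)..1,
          (localDisc x (periodicInterval (Int.fract (-δ)) (Int.fract (y - δ))))^2 := by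
    apply intervalIntegral.integral_congr
    intro δ hδ
    rw [huIcc] at hδ
    apply intervalIntegral.integral_congr
    intro y hy
    rw [huIcc] at hy
    exact key_sq hN x hx δ y hδ hy
  rw [step1]
  -- Step 2: for each δ, shift the inner variable
  have step2 : ∀ δ : ℝ, (∫ y in (0:ℝ)..1,
        (localDisc x (periodicInterval (Int.fract (-δ)) (Int.fract (y - δ))))^2)
      = ∫ y in (0:ℝ)..1,
          (localDisc x (periodicInterval (Int.fract (-δ)) (Int.fract y)))^2 := by
    intro δ
    have hper : Function.Periodic
        (fun y => (localDisc x (periodicInterval (Int.fract (-δ)) (Int.fract y)))^2) 1 :=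
      fun y => by simp only [Int.fract_add_one]
    have h1 : (∫ y in (0:ℝ)..1,
          (localDisc x (periodicInterval (Int.fract (-δ)) (Int.fract (y - δ))))^2)
        = ∫ y in (0:ℝ) - δ..1 - δ,
            (localDisc x (periodicInterval (Int.fract (-δ)) (Int.fract y)))^2 :=
      intervalIntegral.integral_comp_sub_right
        (fun y => (localDisc x (periodicInterval (Int.fract (-δ)) (Int.fract y)))^2) δ
    rw [h1, show (0:ℝ) - δ = -δ by ring, show (1:ℝ) - δ = -δ + 1 by ring]
    have h2 := hper.intervalIntegral_add_eq (-δ) 0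
    simpa using h2
  simp only [step2]
  -- Step 3: shift the outer variable
  have hperH : Function.Periodic
      (fun u => ∫ y in (0:ℝ)..1,
        (localDisc x (periodicInterval (Int.fract u) (Int.fract y)))^2) 1 :=
    fun u => by simp only [Int.fract_add_one]
  have h3 : (∫ δ in (0:ℝ)..1, ∫ y in (0:ℝ)..1,
        (localDisc x (periodicInterval (Int.fract (-δ)) (Int.fract y)))^2)
      = ∫ u in (-1:ℝ)..0, ∫ y in (0:ℝ)..1,
          (localDisc x (periodicInterval (Int.fract u) (Int.fract y)))^2 := by
    have := intervalIntegral.integral_comp_neg (a := (0:ℝ)) (b := 1)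
      (fun u => ∫ y in (0:ℝ)..1,
        (localDisc x (periodicInterval (Int.fract u) (Int.fract y)))^2)
    simpa using this
  rw [h3]
  have h4 : (∫ u in (-1:ℝ)..0, ∫ y in (0:ℝ)..1,
        (localDisc x (periodicInterval (Int.fract u) (Int.fract y)))^2)
      = ∫ u in (0:ℝ)..1, ∫ y in (0:ℝ)..1,
          (localDisc x (periodicInterval (Int.fract u) (Int.fract y)))^2 := by
    have := hperH.intervalIntegral_add_eq (-1 : ℝ) 0
    simpa using this
  rw [h4]
  -- Step 4: remove the fractional parts
  apply intervalIntegral.integral_congr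
  intro u hu
  rw [huIcc] at hu
  apply intervalIntegral.integral_congr
  intro z hz
  rw [huIcc] at hz
  exact fract_removal hN x hx u z hu hz
end

section
/- The average of the squared periodic L₂-discrepancy over all N-element point sets in [0,1)^d, i.e., ∫_{([0,1]^d)^N} (L_{2,N}^per({x_1,...,x_N}))² dx_1...dx_N, equals (1/N)(1/2^d - 1/3^d). -/
/-!
Expanding the double sum, the average is `N⁻²` times a sum of `N²` integrals of the product
kernel `K(x, y) = ∏ⱼ (1/3 + B₂|xⱼ - yⱼ|)` evaluated at pairs of points. A diagonal term is the
constant `K(x, x) = 2⁻ᵈ`. For `n ≠ m` the points `X n` and `X m` are independent and uniform on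
the cube, and integrating out `y` already gives `3⁻ᵈ`, because `t ↦ B₂|s - t|` has mean zero
on `[0, 1]`. Hence the average is `N⁻² (N 2⁻ᵈ + (N² - N) 3⁻ᵈ) - 3⁻ᵈ = N⁻¹ (2⁻ᵈ - 3⁻ᵈ)`.
-/

open MeasureTheory

/-- The second Bernoulli polynomial `B₂(x) = x² - x + 1/6`. -/
noncomputable def bern2 (x : ℝ) : ℝ := x^2 - x + 1/6

open ProbabilityTheory Set Function

theorem MeasureTheory.MeasurePreserving.integral_comp_of_aestronglyMeasurable
    {α β : Type*} [MeasurableSpace α] [MeasurableSpace β] {μ : Measure α} {ν : Measure β}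
    {G : Type*} [NormedAddCommGroup G] [NormedSpace ℝ G] {f : α → β} (hf : MeasurePreserving f μ ν)
    {g : β → G} (hg : AEStronglyMeasurable g ν) :
    ∫ x, g (f x) ∂μ = ∫ y, g y ∂ν := by
  rw [← hf.map_eq] at hg ⊢
  exact (integral_map hf.aemeasurable hg).symm

theorem MeasureTheory.restrict_Icc_eq_pi {ι : Type*} [Fintype ι] {α : ι → Type*}
    [∀ i, MeasureSpace (α i)] [∀ i, SigmaFinite (volume : Measure (α i))] [∀ i, Preorder (α i)]
    (a b : ∀ i, α i) :
    volume.restrict (Icc a b) = Measure.pi fun i => volume.restrict (Icc (a i) (b i)) := by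
  rw [← pi_univ_Icc, volume_pi, Measure.restrict_pi_pi]

section PairMarginal

variable {ι E : Type*} [Fintype ι] [MeasurableSpace E] {ν : Measure E} [IsProbabilityMeasure ν]

theorem measurePreserving_pi_pair {n m : ι} (hnm : n ≠ m) :
    MeasurePreserving (fun X : ι → E => (X n, X m)) (Measure.pi fun _ => ν) (ν.prod ν) := by
  have hind : IndepFun (eval n) (eval m) (Measure.pi fun _ : ι => ν) :=
    (iIndepFun_pi (X := fun _ => id) fun _ => aemeasurable_id).indepFun hnm
  refine ⟨(measurable_pi_apply n).prodMk (measurable_pi_apply m), ?_⟩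
  rw [hind.map_prod_eq_prod_map_map (measurable_pi_apply n).aemeasurable
    (measurable_pi_apply m).aemeasurable, (measurePreserving_eval _ n).map_eq,
    (measurePreserving_eval _ m).map_eq]

variable {K : E → E → ℝ}

theorem integrable_pi_apply_apply (hK : Integrable (uncurry K) (ν.prod ν))
    (hKdiag : Integrable (fun x => K x x) ν) (n m : ι) :
    Integrable (fun X : ι → E => K (X n) (X m)) (Measure.pi fun _ => ν) := by
  rcases eq_or_ne n m with rfl | hnm
  · exact (measurePreserving_eval (fun _ => ν) n).integrable_comp_of_integrable hKdiag
  · exact (measurePreserving_pi_pair hnm).integrable_comp_of_integrable hK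

theorem integral_pi_apply_apply [DecidableEq ι] (hK : Integrable (uncurry K) (ν.prod ν))
    (hKdiag : Integrable (fun x => K x x) ν) (n m : ι) :
    ∫ X, K (X n) (X m) ∂(Measure.pi fun _ => ν) =
      if n = m then ∫ x, K x x ∂ν else ∫ p, uncurry K p ∂(ν.prod ν) := by
  split_ifs with hnm
  · subst hnm
    exact (measurePreserving_eval (fun _ : ι => ν) n).integral_comp_of_aestronglyMeasurable
      hKdiag.aestronglyMeasurable
  · exact (measurePreserving_pi_pair hnm).integral_comp_of_aestronglyMeasurable
      hK.aestronglyMeasurable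

theorem integral_pi_sum_sum (hK : Integrable (uncurry K) (ν.prod ν))
    (hKdiag : Integrable (fun x => K x x) ν) :
    ∫ X : ι → E, ∑ n, ∑ m, K (X n) (X m) ∂(Measure.pi fun _ => ν) =
      Fintype.card ι * ∫ x, K x x ∂ν +
        (Fintype.card ι ^ 2 - Fintype.card ι : ℝ) * ∫ p, uncurry K p ∂(ν.prod ν) := by
  classical
  have hint := integrable_pi_apply_apply (ι := ι) hK hKdiag
  rw [integral_finsetSum _ fun n _ => integrable_finsetSum _ fun m _ => hint n m]
  simp_rw [integral_finsetSum _ fun m _ => hint _ m, integral_pi_apply_apply hK hKdiag]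
  simp only [Finset.sum_ite, Finset.sum_const, Finset.filter_eq, Finset.filter_ne,
    Finset.card_erase_of_mem, Finset.mem_univ, if_true, Finset.card_singleton, Finset.card_univ,
    one_smul, nsmul_eq_mul]
  obtain h | h := (Fintype.card ι).eq_zero_or_pos
  · simp [h]
  · rw [Nat.cast_sub h]
    ring

end PairMarginal

instance : IsProbabilityMeasure (volume.restrict (Icc (0 : ℝ) 1)) := ⟨by simp⟩

instance {ι : Type*} [Fintype ι] : IsProbabilityMeasure (volume.restrict (Icc (0 : ι → ℝ) 1)) :=
  ⟨by simp [Real.volume_Icc_pi]⟩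

@[fun_prop]
theorem continuous_bern2 : Continuous bern2 := by
  unfold bern2
  fun_prop

theorem integral_bern2 (a : ℝ) : ∫ t in (0 : ℝ)..a, bern2 t = a ^ 3 / 3 - a ^ 2 / 2 + a / 6 := by
  simp [bern2, integral_pow]
  ring

theorem integral_bern2_abs_sub {s : ℝ} (hs : s ∈ Icc (0 : ℝ) 1) :
    ∫ t in (0 : ℝ)..1, bern2 |s - t| = 0 := by
  have hcont : Continuous fun t => bern2 |s - t| := by fun_prop
  have hleft : ∫ t in (0 : ℝ)..s, bern2 |s - t| = ∫ t in (0 : ℝ)..s, bern2 (s - t) :=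
    intervalIntegral.integral_congr fun t ht => by
      rw [uIcc_of_le hs.1] at ht
      simp only [abs_of_nonneg (sub_nonneg.2 ht.2)]
  have hright : ∫ t in s..1, bern2 |s - t| = ∫ t in s..1, bern2 (t - s) :=
    intervalIntegral.integral_congr fun t ht => by
      rw [uIcc_of_le hs.2] at ht
      simp only [abs_sub_comm s, abs_of_nonneg (sub_nonneg.2 ht.1)]
  rw [← intervalIntegral.integral_add_adjacent_intervals (hcont.intervalIntegrable 0 s)
    (hcont.intervalIntegrable s 1), hleft, hright, intervalIntegral.integral_comp_sub_left bern2,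
    intervalIntegral.integral_comp_sub_right bern2]
  simp only [sub_self, sub_zero, integral_bern2]
  ring

theorem setIntegral_Icc_one_third_add_bern2_abs_sub {s : ℝ} (hs : s ∈ Icc (0 : ℝ) 1) :
    ∫ t in Icc (0 : ℝ) 1, (1 / 3 + bern2 |s - t|) = 1 / 3 := by
  rw [integral_Icc_eq_integral_Ioc, ← intervalIntegral.integral_of_le zero_le_one,
    intervalIntegral.integral_add intervalIntegrable_const
      ((by fun_prop : Continuous fun t => bern2 |s - t|).intervalIntegrable _ _),
    integral_bern2_abs_sub hs]
  simp

section PeriodicKernel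

variable {ι : Type*} [Fintype ι]

noncomputable def periodicKernel (x y : ι → ℝ) : ℝ := ∏ j, (1 / 3 + bern2 |x j - y j|)

theorem continuous_periodicKernel : Continuous (uncurry (periodicKernel (ι := ι))) := by
  unfold periodicKernel
  fun_prop

theorem periodicKernel_self (x : ι → ℝ) : periodicKernel x x = 1 / 2 ^ Fintype.card ι := by
  norm_num [periodicKernel, bern2]

theorem setIntegral_periodicKernel_right {x : ι → ℝ} (hx : x ∈ Icc 0 1) :
    ∫ y in Icc 0 1, periodicKernel x y = 1 / 3 ^ Fintype.card ι := by
  unfold periodicKernel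
  rw [restrict_Icc_eq_pi, integral_fintype_prod_eq_prod (fun j t => 1 / 3 + bern2 |x j - t|)]
  simp only [Pi.zero_apply, Pi.one_apply]
  rw [Finset.prod_congr rfl fun j _ =>
      setIntegral_Icc_one_third_add_bern2_abs_sub ⟨hx.1 j, hx.2 j⟩,
    Finset.prod_const, Finset.card_univ, one_div_pow]

theorem integrable_periodicKernel :
    Integrable (uncurry (periodicKernel (ι := ι)))
      ((volume.restrict (Icc 0 1)).prod (volume.restrict (Icc 0 1))) := by
  rw [Measure.prod_restrict, ← Measure.volume_eq_prod]
  exact continuous_periodicKernel.continuousOn.integrableOn_compact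
    (isCompact_Icc.prod isCompact_Icc)

theorem integral_prod_periodicKernel :
    ∫ p, uncurry (periodicKernel (ι := ι)) p
        ∂((volume.restrict (Icc 0 1)).prod (volume.restrict (Icc 0 1))) =
      1 / 3 ^ Fintype.card ι := by
  rw [integral_prod _ integrable_periodicKernel]
  simp only [uncurry_apply_pair]
  rw [setIntegral_congr_fun measurableSet_Icc fun x hx => setIntegral_periodicKernel_right hx]
  simp

end PeriodicKernel

/-- The average of the squared periodic `L₂`-discrepancy (in its Bernoulli-polynomial form)
over all `N`-element point sets in `[0,1]^d` equals `(1/N)(1/2^d - 1/3^d)`. -/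
theorem avg_periodicL2sq (d N : ℕ) (hN : 1 ≤ N) :
    ∫ X in Set.Icc (0 : Fin N → Fin d → ℝ) 1,
        (-(1/3^d) + (1/(N:ℝ)^2) * ∑ n : Fin N, ∑ m : Fin N,
          ∏ j : Fin d, (1/3 + bern2 |X n j - X m j|))
      = (1/(N:ℝ)) * (1/2^d - 1/3^d) := by
  have hcube : volume.restrict (Icc (0 : Fin N → Fin d → ℝ) 1) =
      Measure.pi fun _ => volume.restrict (Icc (0 : Fin d → ℝ) 1) := restrict_Icc_eq_pi 0 1
  have hK := integrable_periodicKernel (ι := Fin d)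
  have hdiag : Integrable (fun x => periodicKernel x x)
      (volume.restrict (Icc (0 : Fin d → ℝ) 1)) := by
    simp only [periodicKernel_self]
    exact integrable_const _
  simp only [← periodicKernel.eq_1]
  rw [hcube, integral_add (integrable_const _) ((integrable_finsetSum _ fun n _ =>
    integrable_finsetSum _ fun m _ => integrable_pi_apply_apply hK hdiag n m).const_mul _),
    integral_const, integral_const_mul, integral_pi_sum_sum hK hdiag, integral_prod_periodicKernel]
  simp only [periodicKernel_self, integral_const, probReal_univ, Fintype.card_fin, one_smul]
  have hN' : (N : ℝ) ≠ 0 := Nat.cast_ne_zero.2 (Nat.one_le_iff_ne_zero.1 hN)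
  field_simp
  ring
end

section
/- Let P = {x_1,...,x_N} ⊆ [0,1)^d and suppose its squared periodic L₂-discrepancy satisfies -1/3^d + (1/N²)∑_{n,m=1}^N ∏_{j=1}^d (1/3 + B_2(|x_{n,j} - x_{m,j}|)) ≤ ε²/3^d for some ε ∈ (0,1). Then N ≥ (1/(1+ε²))·(3/2)^d. -/
/-- If the squared periodic `L₂`-discrepancy of `P ⊆ [0,1)^d` (in its Bernoulli-polynomial
form) is at most `ε²/3^d` with `ε ∈ (0,1)`, then `N ≥ (1/(1+ε²))·(3/2)^d`. -/
theorem curse_unweighted (d N : ℕ) (hN : 1 ≤ N) (X : Fin N → Fin d → ℝ)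
    (hX : ∀ n j, X n j ∈ Set.Ico (0:ℝ) 1) (ε : ℝ) (hε : ε ∈ Set.Ioo (0:ℝ) 1)
    (hdisc : -(1/3^d) + (1/(N:ℝ)^2) * ∑ n : Fin N, ∑ m : Fin N,
        ∏ j : Fin d, (1/3 + bern2 |X n j - X m j|) ≤ ε^2/3^d) :
    (N : ℝ) ≥ (1/(1+ε^2)) * (3/2)^d := by
  have hNpos : (0:ℝ) < N := by exact_mod_cast hN
  have hfac : ∀ x : ℝ, (0:ℝ) ≤ 1/3 + bern2 x := by
    intro x; unfold bern2; nlinarith [sq_nonneg (x - 1/2)]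
  set S := ∑ n : Fin N, ∑ m : Fin N, ∏ j : Fin d, (1/3 + bern2 |X n j - X m j|) with hS
  have hterm : ∀ n m : Fin N, 0 ≤ ∏ j : Fin d, (1/3 + bern2 |X n j - X m j|) :=
    fun n m => Finset.prod_nonneg fun j _ => hfac _
  have hdiag : ∀ n : Fin N, ∏ j : Fin d, (1/3 + bern2 |X n j - X n j|) = (1/2:ℝ)^d := by
    intro n
    have h : ∀ j ∈ Finset.univ, (1/3 + bern2 |X n j - X n j|) = (1/2:ℝ) := by
      intro j _; simp [bern2]; norm_num
    rw [Finset.prod_congr rfl h, Finset.prod_const]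
    simp
  have hlow : (N:ℝ) * (1/2)^d ≤ S := by
    calc (N:ℝ) * (1/2)^d = ∑ _n : Fin N, (1/2:ℝ)^d := by
          rw [Finset.sum_const, Finset.card_univ, Fintype.card_fin, nsmul_eq_mul]
      _ = ∑ n : Fin N, ∏ j : Fin d, (1/3 + bern2 |X n j - X n j|) :=
          Finset.sum_congr rfl fun n _ => (hdiag n).symm
      _ ≤ S := Finset.sum_le_sum fun n _ =>
          Finset.single_le_sum (fun m _ => hterm n m) (Finset.mem_univ n)
  have h3 : (0:ℝ) < (3:ℝ)^d := by positivity
  have hNsq : (0:ℝ) < (N:ℝ)^2 := by positivity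
  have hε2 : (0:ℝ) < 1 + ε^2 := by nlinarith [hε.1]
  have e1 : (1/(N:ℝ)^2) * S = S/(N:ℝ)^2 := one_div_mul_eq_div _ _
  have h1 : S/(N:ℝ)^2 ≤ (1+ε^2)/(3:ℝ)^d := by
    have e2 : (1+ε^2)/(3:ℝ)^d = 1/(3:ℝ)^d + ε^2/(3:ℝ)^d := by ring
    rw [e2]; linarith [hdisc, e1.symm ▸ hdisc]
  have hkey : S * (3:ℝ)^d ≤ (1+ε^2) * (N:ℝ)^2 := (div_le_div_iff₀ hNsq h3).mp h1
  have hgoal : (3:ℝ)^d * (1/2:ℝ)^d ≤ (1+ε^2) * N := by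
    have hh : (N:ℝ) * (1/2)^d * (3:ℝ)^d ≤ (1+ε^2) * (N:ℝ)^2 := by
      nlinarith [hlow, h3]
    nlinarith [hh, hNpos]
  have hpow : ((3:ℝ)/2)^d = (3:ℝ)^d * (1/2:ℝ)^d := by
    rw [← mul_pow]; norm_num
  rw [ge_iff_le, hpow, one_div, inv_mul_le_iff₀ hε2]
  linarith
end

section
/- For any point set P = {x_1,...,x_N} ⊆ [0,1)^d, the squared periodic L₂-discrepancy satisfies L_{2,N}^per(P)² ≥ -1/3^d + 1/(N·2^d). -/
/-! Every factor `1/3 + B₂(x) = (x - 1/2)² + 1/4` is nonnegative, so dropping the off-diagonal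
terms only lowers the double sum; the `N` diagonal terms are each `(1/3 + B₂(0))^d = 2^(-d)`. -/

lemma one_third_add_bern2_eq (x : ℝ) : 1/3 + bern2 x = (x - 1/2)^2 + 1/4 := by
  unfold bern2; ring

lemma one_third_add_bern2_nonneg (x : ℝ) : 0 ≤ 1/3 + bern2 x := by
  rw [one_third_add_bern2_eq]; positivity

lemma one_third_add_bern2_zero : 1/3 + bern2 0 = 1/2 := by
  norm_num [bern2]

lemma Finset.sum_diag_le_sum_sum {ι : Type*} [Fintype ι] {K : ι → ι → ℝ}
    (hK : ∀ n m, 0 ≤ K n m) : ∑ n, K n n ≤ ∑ n, ∑ m, K n m :=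
  sum_le_sum fun n _ => single_le_sum (fun m _ => hK n m) (mem_univ n)

lemma one_div_sq_mul_mul (N c : ℝ) : 1/N^2 * (N * c) = c/N := by
  rcases eq_or_ne N 0 with rfl | hN
  · simp
  · field_simp

theorem periodicL2sq_lower_general (d N : ℕ) (X : Fin N → Fin d → ℝ) :
    -(1/3^d) + (1/(N:ℝ)^2) * ∑ n : Fin N, ∑ m : Fin N,
        ∏ j : Fin d, (1/3 + bern2 |X n j - X m j|)
      ≥ -(1/3^d) + 1/((N:ℝ) * 2^d) := by
  have hdiag : ∀ n, ∏ j : Fin d, (1/3 + bern2 |X n j - X n j|) = (1/2)^d := fun n => by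
    simp only [sub_self, abs_zero, one_third_add_bern2_zero, Finset.prod_const,
      Finset.card_univ, Fintype.card_fin]
  have hsum : (N:ℝ) * (1/2)^d ≤ ∑ n : Fin N, ∑ m : Fin N,
      ∏ j : Fin d, (1/3 + bern2 |X n j - X m j|) := by
    have := Finset.sum_diag_le_sum_sum
      (K := fun n m => ∏ j : Fin d, (1/3 + bern2 |X n j - X m j|))
      fun n m => Finset.prod_nonneg fun j _ => one_third_add_bern2_nonneg _
    simpa only [hdiag, Finset.sum_const, Finset.card_univ, Fintype.card_fin, nsmul_eq_mul]
      using this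
  calc -(1/3^d) + 1/((N:ℝ) * 2^d)
      = -(1/3^d) + 1/(N:ℝ)^2 * ((N:ℝ) * (1/2)^d) := by
        rw [one_div_sq_mul_mul, one_div_pow, div_div, mul_comm]
    _ ≤ _ := by gcongr

/-- For any `N`-point set `P ⊆ [0,1)^d`, the squared periodic `L₂`-discrepancy (in its
Bernoulli-polynomial form) is at least `-1/3^d + 1/(N·2^d)`. -/
theorem periodicL2sq_lower (d N : ℕ) (hN : 1 ≤ N) (X : Fin N → Fin d → ℝ)
    (hX : ∀ n j, X n j ∈ Set.Ico (0:ℝ) 1) :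
    -(1/3^d) + (1/(N:ℝ)^2) * ∑ n : Fin N, ∑ m : Fin N,
        ∏ j : Fin d, (1/3 + bern2 |X n j - X m j|)
      ≥ -(1/3^d) + 1/((N:ℝ) * 2^d) :=
  periodicL2sq_lower_general d N X
end

section
/- Let P = {x_1,...,x_N} ⊆ [0,1)^d with nonnegative weights w_1,...,w_N. The squared weighted periodic L₂-discrepancy, equal to 1/3^d - (2/3^d)∑_n w_n + ∑_{n,m} w_n w_m ∏_j (1/3 + B_2(|x_{n,j}-x_{m,j}|)), is at least 1/3^d - 2^d N / 3^{2d}. Consequently, if this discrepancy is at most ε²/3^d with ε ∈ (0,1), then N ≥ (1-ε²)(3/2)^d. -/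
/-!
The factor `1/3 + B₂(t) = (t - 1/2)² + 1/4` is positive and equals `1/2` at `t = 0`, so dropping
the off-diagonal terms bounds the double sum below by `2⁻ᵈ ∑ wₙ²`. Each `wₙ` then enters the
discrepancy through `wₙ² / 2ᵈ - 2 wₙ / 3ᵈ`, a quadratic whose minimum is `-2ᵈ / 9ᵈ`.
-/

open Finset

lemma one_third_add_bern2_pos (x : ℝ) : 0 < 1/3 + bern2 x := by
  unfold bern2
  nlinarith [sq_nonneg (x - 1/2)]

lemma one_third_add_bern2_abs_sub_self (x : ℝ) : 1/3 + bern2 |x - x| = 1/2 := by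
  norm_num [bern2]

lemma Finset.sum_diag_le_sum_sum_s15 {ι M : Type*} [AddCommMonoid M] [PartialOrder M]
    [IsOrderedAddMonoid M] (s : Finset ι) (f : ι → ι → M) (hf : ∀ i ∈ s, ∀ j ∈ s, 0 ≤ f i j) :
    ∑ i ∈ s, f i i ≤ ∑ i ∈ s, ∑ j ∈ s, f i j :=
  sum_le_sum fun i hi => single_le_sum (f := f i) (hf i hi) hi

section QuadraticBound

variable {K : Type*} [Field K] [LinearOrder K] [IsStrictOrderedRing K]

lemma mul_sub_mul_sq_le {a b c : K} (ha : 0 < a) (h : c ^ 2 ≤ 4 * a * b) (x : K) :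
    c * x - a * x ^ 2 ≤ b := by
  nlinarith [sq_nonneg (2 * a * x - c)]

lemma sum_mul_sub_mul_sq_le {ι : Type*} (s : Finset ι) {a b c : K} (ha : 0 < a)
    (h : c ^ 2 ≤ 4 * a * b) (w : ι → K) :
    c * ∑ i ∈ s, w i - a * ∑ i ∈ s, w i ^ 2 ≤ #s * b := by
  rw [mul_sum, mul_sum, ← sum_sub_distrib]
  simpa using sum_le_sum fun i (_ : i ∈ s) => mul_sub_mul_sq_le ha h (w i)

end QuadraticBound

theorem curse_weighted_nonneg_general (d N : ℕ) (X : Fin N → Fin d → ℝ)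
    (w : Fin N → ℝ) (hw : ∀ n, 0 ≤ w n) :
    (1/3^d - (2/3^d) * ∑ n : Fin N, w n
        + ∑ n : Fin N, ∑ m : Fin N, w n * w m *
            ∏ j : Fin d, (1/3 + bern2 |X n j - X m j|)
      ≥ 1/3^d - 2^d * N / 3^(2*d)) ∧
    (∀ ε : ℝ, ε ∈ Set.Ioo (0:ℝ) 1 →
      1/3^d - (2/3^d) * ∑ n : Fin N, w n
          + ∑ n : Fin N, ∑ m : Fin N, w n * w m *
              ∏ j : Fin d, (1/3 + bern2 |X n j - X m j|) ≤ ε^2/3^d →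
        (N : ℝ) ≥ (1 - ε^2) * (3/2)^d) := by
  have diag := sum_diag_le_sum_sum_s15 univ
    (fun n m => w n * w m * ∏ j : Fin d, (1/3 + bern2 |X n j - X m j|))
    fun n _ m _ => mul_nonneg (mul_nonneg (hw n) (hw m))
      (prod_nonneg fun j _ => (one_third_add_bern2_pos _).le)
  simp only [one_third_add_bern2_abs_sub_self, prod_const, card_univ, Fintype.card_fin,
    ← sq, ← sum_mul] at diag
  have quad := sum_mul_sub_mul_sq_le univ (a := (1/2)^d) (b := 2^d / 3^(2*d))
    (c := 2/3^d) (by positivity) (by rw [one_div_pow, pow_mul']; field_simp; norm_num) w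
  simp only [card_univ, Fintype.card_fin] at quad
  refine ⟨by linear_combination diag + quad, fun ε _ hε => ?_⟩
  have hN : (1 - ε^2) / 3^d ≤ 2^d * N / 3^(2*d) := by linear_combination diag + quad + hε
  rw [pow_mul', sq ((3:ℝ)^d), ← div_div, div_le_div_iff_of_pos_right (by positivity),
    le_div_iff₀ (by positivity)] at hN
  rw [ge_iff_le, div_pow, ← mul_div_assoc, div_le_iff₀ (by positivity)]
  linarith

/-- For nonnegative weights, the squared weighted periodic `L₂`-discrepancy (in its
Bernoulli-polynomial form) is at least `1/3^d - 2^d N/3^{2d}`; consequently, if it is at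
most `ε²/3^d` with `ε ∈ (0,1)`, then `N ≥ (1-ε²)(3/2)^d`. -/
theorem curse_weighted_nonneg (d N : ℕ) (hN : 1 ≤ N) (X : Fin N → Fin d → ℝ)
    (hX : ∀ n j, X n j ∈ Set.Ico (0:ℝ) 1) (w : Fin N → ℝ) (hw : ∀ n, 0 ≤ w n) :
    (1/3^d - (2/3^d) * ∑ n : Fin N, w n
        + ∑ n : Fin N, ∑ m : Fin N, w n * w m *
            ∏ j : Fin d, (1/3 + bern2 |X n j - X m j|)
      ≥ 1/3^d - 2^d * N / 3^(2*d)) ∧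
    (∀ ε : ℝ, ε ∈ Set.Ioo (0:ℝ) 1 →
      1/3^d - (2/3^d) * ∑ n : Fin N, w n
          + ∑ n : Fin N, ∑ m : Fin N, w n * w m *
              ∏ j : Fin d, (1/3 + bern2 |X n j - X m j|) ≤ ε^2/3^d →
        (N : ℝ) ≥ (1 - ε^2) * (3/2)^d) :=
  curse_weighted_nonneg_general d N X w hw
end
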